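/- arXiv:1311.5125 — 4 statements merged into one kernel-verified Lean document; each statement's English description precedes it below -/
import Mathlib

section
/- Let v : ℝᵈ → ℝᵈ be a C¹ bijection with everywhere injective Jacobian, φ strictly convex differentiable, g : ℝᵈ → ℝ with g > 0, and u := ∇φ ∘ v. Then for points x₁,…,xₙ, the unique minimizer μ of x ↦ Σᵢ g(xᵢ) · D_φ(v(x) : v(xᵢ)) is μ = u⁻¹( (Σᵢ g(xᵢ) u(xᵢ)) / (Σᵢ g(xᵢ)) ). -/
/-!
If `∇φ(m)` is the `w`-weighted mean of the gradients `∇φ(pᵢ)`, the Bregman compensation identity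
`∑ wᵢ D_φ(a : pᵢ) - ∑ wᵢ D_φ(m : pᵢ) = (∑ wᵢ) · D_φ(a : m)` shows that `m` minimizes
`a ↦ ∑ wᵢ D_φ(a : pᵢ)`, strictly by strict convexity of `φ`. Taking `pᵢ = v(xᵢ)`, `wᵢ = g(xᵢ)`, the
point `m = v(μ₀)` has `∇φ(m) = u(μ₀)`, the weighted `u`-mean, and injectivity of `v` transfers
uniqueness back to `μ₀`.
-/

open Set Finset

open scoped InnerProductSpace

section Bregman

variable {E : Type*} [NormedAddCommGroup E] [InnerProductSpace ℝ E]

def bregmanDiv (φ : E → ℝ) (gradφ : E → E) (a b : E) : ℝ :=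
  φ a - φ b - ⟪a - b, gradφ b⟫_ℝ

theorem sum_mul_bregmanDiv_sub_sum_mul_bregmanDiv {ι : Type*} {I : Finset ι} {w : ι → ℝ}
    {φ : E → ℝ} {gradφ : E → E} {p : ι → E} {G : E}
    (hmean : ∑ i ∈ I, w i • gradφ (p i) = (∑ i ∈ I, w i) • G) (a b : E) :
    ∑ i ∈ I, w i * bregmanDiv φ gradφ a (p i) - ∑ i ∈ I, w i * bregmanDiv φ gradφ b (p i) =
      (∑ i ∈ I, w i) * (φ a - φ b - ⟪a - b, G⟫_ℝ) := by
  calc _ = (∑ i ∈ I, w i) * (φ a - φ b) - ⟪a - b, ∑ i ∈ I, w i • gradφ (p i)⟫_ℝ := by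
        simp only [bregmanDiv, inner_sum, real_inner_smul_right, inner_sub_left, Finset.sum_mul,
          ← Finset.sum_sub_distrib]
        exact Finset.sum_congr rfl fun i _ => by ring
    _ = _ := by
        rw [hmean, real_inner_smul_right]
        ring

variable [CompleteSpace E] {s : Set E} {φ : E → ℝ} {G x y : E}

theorem ConvexOn.inner_sub_le_of_hasGradientAt (hφ : ConvexOn ℝ s φ) (hx : x ∈ s) (hy : y ∈ s)
    (hG : HasGradientAt φ G x) : ⟪y - x, G⟫_ℝ ≤ φ y - φ x := by
  set ℓ : ℝ →ᵃ[ℝ] E := AffineMap.lineMap x y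
  have hℓ0 : ℓ 0 = x := AffineMap.lineMap_apply_zero x y
  have hℓ1 : ℓ 1 = y := AffineMap.lineMap_apply_one x y
  have hline : HasDerivAt (φ ∘ ℓ) ⟪y - x, G⟫_ℝ 0 := by
    have hG' := hG.hasFDerivAt
    rw [← hℓ0] at hG'
    simpa [real_inner_comm] using hG'.comp_hasDerivAt (0 : ℝ) AffineMap.hasDerivAt_lineMap
  have h := (hφ.comp_affineMap ℓ).le_slope_of_hasDerivAt
    (by simpa [hℓ0] using hx) (by simpa [hℓ1] using hy) one_pos hline
  simpa [slope_def_field, hℓ0, hℓ1] using h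

theorem StrictConvexOn.inner_sub_lt_of_hasGradientAt (hφ : StrictConvexOn ℝ s φ) (hx : x ∈ s)
    (hy : y ∈ s) (hxy : y ≠ x) (hG : HasGradientAt φ G x) : ⟪y - x, G⟫_ℝ < φ y - φ x := by
  set m : E := (1 / 2 : ℝ) • x + (1 / 2 : ℝ) • y
  have hm : m ∈ s := hφ.1 hx hy (by norm_num) (by norm_num) (by norm_num)
  have hmid : φ m < (1 / 2 : ℝ) * φ x + (1 / 2 : ℝ) * φ y :=
    hφ.2 hx hy hxy.symm (by norm_num) (by norm_num) (by norm_num)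
  have htangent := hφ.convexOn.inner_sub_le_of_hasGradientAt hx hm hG
  have hmx : m - x = (1 / 2 : ℝ) • (y - x) := by module
  rw [hmx, real_inner_smul_left] at htangent
  linarith

variable {ι : Type*} {I : Finset ι} {w : ι → ℝ} {gradφ : E → E} {p : ι → E}

theorem ConvexOn.sum_mul_bregmanDiv_le (hφ : ConvexOn ℝ s φ) (hx : x ∈ s)
    (hG : HasGradientAt φ G x) (hw : ∀ i ∈ I, 0 ≤ w i)
    (hmean : ∑ i ∈ I, w i • gradφ (p i) = (∑ i ∈ I, w i) • G) (hy : y ∈ s) :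
    ∑ i ∈ I, w i * bregmanDiv φ gradφ x (p i) ≤ ∑ i ∈ I, w i * bregmanDiv φ gradφ y (p i) := by
  have hgap := sum_mul_bregmanDiv_sub_sum_mul_bregmanDiv (φ := φ) hmean y x
  have := mul_nonneg (Finset.sum_nonneg hw)
    (sub_nonneg.2 (hφ.inner_sub_le_of_hasGradientAt hx hy hG))
  linarith

theorem StrictConvexOn.sum_mul_bregmanDiv_lt (hφ : StrictConvexOn ℝ s φ) (hx : x ∈ s)
    (hG : HasGradientAt φ G x) (hw : 0 < ∑ i ∈ I, w i)
    (hmean : ∑ i ∈ I, w i • gradφ (p i) = (∑ i ∈ I, w i) • G) (hy : y ∈ s) (hxy : y ≠ x) :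
    ∑ i ∈ I, w i * bregmanDiv φ gradφ x (p i) < ∑ i ∈ I, w i * bregmanDiv φ gradφ y (p i) := by
  have hgap := sum_mul_bregmanDiv_sub_sum_mul_bregmanDiv (φ := φ) hmean y x
  have := mul_pos hw (sub_pos.2 (hφ.inner_sub_lt_of_hasGradientAt hx hy hxy hG))
  linarith

end Bregman

theorem left_population_minimizer_vConformal_general {d n : ℕ} (hn : 0 < n)
    (φ : EuclideanSpace ℝ (Fin d) → ℝ)
    (gradφ : EuclideanSpace ℝ (Fin d) → EuclideanSpace ℝ (Fin d))
    (v : EuclideanSpace ℝ (Fin d) → EuclideanSpace ℝ (Fin d))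
    (g : EuclideanSpace ℝ (Fin d) → ℝ)
    (xs : Fin n → EuclideanSpace ℝ (Fin d))
    (hconv : StrictConvexOn ℝ Set.univ φ)
    (hgrad : ∀ x, HasGradientAt φ (gradφ x) x)
    (hvbij : Function.Bijective v)
    (hg : ∀ x, 0 < g x)
    (u : EuclideanSpace ℝ (Fin d) → EuclideanSpace ℝ (Fin d))
    (hu : ∀ x, u x = gradφ (v x)) (hubij : Function.Bijective u)
    (F : EuclideanSpace ℝ (Fin d) → ℝ)
    (hF : ∀ x, F x = ∑ i, g (xs i) *
      (φ (v x) - φ (v (xs i)) - (inner ℝ (v x - v (xs i)) (gradφ (v (xs i))) : ℝ)))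
    (μ₀ : EuclideanSpace ℝ (Fin d))
    (hμ₀ : μ₀ = Function.invFun u ((∑ i, g (xs i))⁻¹ • ∑ i, g (xs i) • u (xs i))) :
    (∀ x, F μ₀ ≤ F x) ∧ ∀ μ, (∀ x, F μ ≤ F x) → μ = μ₀ := by
  have hF' : ∀ x, F x = ∑ i, g (xs i) * bregmanDiv φ gradφ (v x) (v (xs i)) := hF
  have hW : 0 < ∑ i, g (xs i) :=
    Finset.sum_pos (fun i _ => hg (xs i)) (Finset.univ_nonempty_iff.2 ⟨⟨0, hn⟩⟩)
  have hG : HasGradientAt φ (u μ₀) (v μ₀) := hu μ₀ ▸ hgrad (v μ₀)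
  have hmean : ∑ i, g (xs i) • gradφ (v (xs i)) = (∑ i, g (xs i)) • u μ₀ := by
    rw [hμ₀, Function.invFun_eq (hubij.2 _), smul_inv_smul₀ hW.ne']
    simp only [hu]
  refine ⟨fun x => ?_, fun μ hμ => ?_⟩
  · rw [hF', hF']
    exact hconv.convexOn.sum_mul_bregmanDiv_le (mem_univ _) hG (fun i _ => (hg (xs i)).le) hmean
      (mem_univ _)
  · by_contra hne
    have hlt := hconv.sum_mul_bregmanDiv_lt (mem_univ _) hG hW hmean (mem_univ _)
      (hvbij.1.ne hne)
    rw [← hF', ← hF'] at hlt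
    exact (hμ μ₀).not_gt hlt

/-- The unique left population minimizer of a `v`-conformal divergence is the
`g`-weighted `u`-mean, where `u = ∇φ ∘ v`. -/
theorem left_population_minimizer_vConformal {d n : ℕ} (hn : 0 < n)
    (φ : EuclideanSpace ℝ (Fin d) → ℝ)
    (gradφ : EuclideanSpace ℝ (Fin d) → EuclideanSpace ℝ (Fin d))
    (v : EuclideanSpace ℝ (Fin d) → EuclideanSpace ℝ (Fin d))
    (g : EuclideanSpace ℝ (Fin d) → ℝ)
    (xs : Fin n → EuclideanSpace ℝ (Fin d))
    (hconv : StrictConvexOn ℝ Set.univ φ)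
    (hsmooth : ContDiff ℝ 2 φ)
    (hgrad : ∀ x, HasGradientAt φ (gradφ x) x)
    (hv : ContDiff ℝ 1 v) (hvbij : Function.Bijective v)
    (hJ : ∀ x, Function.Injective (fderiv ℝ v x))
    (hg : ∀ x, 0 < g x)
    (u : EuclideanSpace ℝ (Fin d) → EuclideanSpace ℝ (Fin d))
    (hu : ∀ x, u x = gradφ (v x)) (hubij : Function.Bijective u)
    (F : EuclideanSpace ℝ (Fin d) → ℝ)
    (hF : ∀ x, F x = ∑ i, g (xs i) *
      (φ (v x) - φ (v (xs i)) - (inner ℝ (v x - v (xs i)) (gradφ (v (xs i))) : ℝ)))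
    (μ₀ : EuclideanSpace ℝ (Fin d))
    (hμ₀ : μ₀ = Function.invFun u ((∑ i, g (xs i))⁻¹ • ∑ i, g (xs i) • u (xs i))) :
    (∀ x, F μ₀ ≤ F x) ∧ ∀ μ, (∀ x, F μ ≤ F x) → μ = μ₀ :=
  left_population_minimizer_vConformal_general hn φ gradφ v g xs hconv hgrad hvbij hg u hu hubij F
    hF μ₀ hμ₀
end

section
/- There is no symmetric total Bregman divergence in one dimension: if φ : ℝ → ℝ is strictly convex and twice differentiable and D(x:y) := D_φ(x:y)/√(1+φ'(y)²), then it is not the case that D(x:y) = D(y:x) for all x, y. -/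
set_option maxHeartbeats 1600000 in
/-- There is no symmetric 1D total Bregman divergence. -/
theorem no_symmetric_total_bregman
    (φ : ℝ → ℝ)
    (hconv : StrictConvexOn ℝ Set.univ φ)
    (hsmooth : ContDiff ℝ 2 φ)
    (hsym : ∀ x y,
      (φ x - φ y - (x - y) * deriv φ y) / Real.sqrt (1 + (deriv φ y) ^ 2) =
      (φ y - φ x - (y - x) * deriv φ x) / Real.sqrt (1 + (deriv φ x) ^ 2)) :
    False := by
  have hdiff : Differentiable ℝ φ := hsmooth.differentiable (by norm_num)
  set f : ℝ → ℝ := deriv φ with hf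
  -- f is strictly monotone
  have hmono : StrictMono f := by
    intro a b hab
    exact hconv.strictMonoOn_deriv (fun x _ => hdiff.differentiableAt)
      (Set.mem_univ a) (Set.mem_univ b) hab
  -- tangent line inequality
  have htan : ∀ a b : ℝ, (b - a) * f a ≤ φ b - φ a := by
    intro a b
    rcases lt_trichotomy a b with h | h | h
    · have h1 := hconv.convexOn.deriv_le_slope (Set.mem_univ a) (Set.mem_univ b) h
        hdiff.differentiableAt
      rw [slope_def_field, le_div_iff₀ (by linarith : (0:ℝ) < b - a)] at h1
      nlinarith
    · simp [h]
    · have h1 := hconv.convexOn.slope_le_deriv (Set.mem_univ b) (Set.mem_univ a) h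
        hdiff.differentiableAt
      rw [slope_def_field, div_le_iff₀ (by linarith : (0:ℝ) < a - b)] at h1
      nlinarith
  -- the conformal factor
  set s : ℝ → ℝ := fun t => Real.sqrt (1 + f t ^ 2) with hs
  have hs1 : ∀ t, 1 ≤ s t := by
    intro t
    have h0 : (1:ℝ) = Real.sqrt 1 := by simp
    calc (1:ℝ) = Real.sqrt 1 := h0
      _ ≤ Real.sqrt (1 + f t ^ 2) := Real.sqrt_le_sqrt (by nlinarith [sq_nonneg (f t)])
  have hspos : ∀ t, 0 < s t := fun t => lt_of_lt_of_le one_pos (hs1 t)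
  have hsf : ∀ t, f t ≤ s t := by
    intro t
    calc f t ≤ |f t| := le_abs_self _
      _ = Real.sqrt (f t ^ 2) := (Real.sqrt_sq_eq_abs _).symm
      _ ≤ Real.sqrt (1 + f t ^ 2) := Real.sqrt_le_sqrt (by linarith)
  -- Bregman divergence
  set D : ℝ → ℝ → ℝ := fun x y => φ x - φ y - (x - y) * f y with hD
  have hDnonneg : ∀ x y, 0 ≤ D x y := by
    intro x y
    have := htan y x
    simp only [hD]
    linarith
  -- product form of symmetry
  have hS : ∀ x y, s x * D x y = s y * D y x := by
    intro x y
    have h := hsym x y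
    rw [div_eq_div_iff (hspos y).ne' (hspos x).ne'] at h
    simp only [hD]
    linarith
  -- lower bound for D via a midpoint
  have hDlow : ∀ x y m : ℝ, (x - m) * (f m - f y) ≤ D x y := by
    intro x y m
    have h1 := htan y m
    have h2 := htan m x
    simp only [hD]
    nlinarith
  clear_value f s D
  by_cases hbdd : BddAbove (Set.range f)
  · -- f bounded above: let L be the sup
    obtain ⟨L, hle, hlub⟩ : ∃ L, (∀ t, f t ≤ L) ∧ ∀ ε, 0 < ε → ∃ T, L - ε < f T := by
      refine ⟨sSup (Set.range f), fun t => le_csSup hbdd ⟨t, rfl⟩, fun ε hε => ?_⟩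
      obtain ⟨_, ⟨T, rfl⟩, hT⟩ := exists_lt_of_lt_csSup (Set.range_nonempty f)
        (show sSup (Set.range f) - ε < sSup (Set.range f) by linarith)
      exact ⟨T, hT⟩
    have hc : 0 < f 1 - f 0 := by
      have := hmono (show (0:ℝ) < 1 by norm_num); linarith
    obtain ⟨c, hcpos, hcdef⟩ : ∃ c, 0 < c ∧ c = f 1 - f 0 := ⟨_, hc, rfl⟩
    have hs0 := hspos 0
    obtain ⟨ε, hεpos, hεdef⟩ : ∃ ε, 0 < ε ∧ s 0 * ε = c / 4 := by
      refine ⟨c / (4 * s 0), div_pos hcpos (by nlinarith), ?_⟩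
      field_simp
    obtain ⟨T₀, hT₀⟩ := hlub ε hεpos
    obtain ⟨T, hT1, hfT⟩ : ∃ T, 1 ≤ T ∧ L - ε < f T :=
      ⟨max T₀ 1, le_max_right _ _, lt_of_lt_of_le hT₀ (hmono.monotone (le_max_left _ _))⟩
    obtain ⟨K, hKdef, hKnonneg⟩ : ∃ K, K = s 0 * T * (L - f 0) ∧ 0 ≤ K := by
      refine ⟨_, rfl, ?_⟩
      have h1 : f 0 ≤ L := hle 0
      have h2 : (0:ℝ) < T := by linarith
      exact mul_nonneg (mul_nonneg hs0.le h2.le) (by linarith)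
    obtain ⟨x, hx2, hxT, hxK⟩ : ∃ x, 2 ≤ x ∧ T < x ∧ 4 * K < x * c := by
      refine ⟨max 2 (max (T + 1) (4 * K / c + 1)), le_max_left _ _, ?_, ?_⟩
      · have h1 : T + 1 ≤ max (T + 1) (4 * K / c + 1) := le_max_left _ _
        have h2 : max (T + 1) (4 * K / c + 1) ≤ max 2 (max (T + 1) (4 * K / c + 1)) :=
          le_max_right _ _
        linarith
      · have h1 : 4 * K / c + 1 ≤ max (T + 1) (4 * K / c + 1) := le_max_right _ _
        have h2 : max (T + 1) (4 * K / c + 1) ≤ max 2 (max (T + 1) (4 * K / c + 1)) :=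
          le_max_right _ _
        have h3 : 4 * K / c < max 2 (max (T + 1) (4 * K / c + 1)) := by linarith
        rw [div_lt_iff₀ hcpos] at h3
        linarith
    -- lower bound: D x 0 ≥ x * c / 2
    have hDx0 : x * c / 2 ≤ D x 0 := by
      have h1 := hDlow x 0 (x / 2)
      have h2 : f 1 ≤ f (x / 2) := hmono.monotone (by linarith)
      nlinarith
    -- upper bound: D 0 x ≤ (x - T) * ε + T * (L - f 0)
    have hD0x : D 0 x ≤ (x - T) * ε + T * (L - f 0) := by
      have h1 := htan T x
      have h2 := htan 0 T
      have h3 : f x - f T ≤ ε := by have := hle x; linarith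
      have h4 : f x - f 0 ≤ L - f 0 := by have := hle x; linarith
      have h5 : 0 ≤ x - T := le_of_lt (by linarith)
      have h6 : (0:ℝ) < T := by linarith
      simp only [hD]
      nlinarith
    -- combine
    have hmain := hS x 0
    have hL1 : x * c / 2 ≤ s x * D x 0 := by
      have h1 : 1 * D x 0 ≤ s x * D x 0 :=
        mul_le_mul_of_nonneg_right (hs1 x) (hDnonneg x 0)
      linarith
    have hL2 : s 0 * D 0 x ≤ x * c / 4 + K := by
      have h1 : s 0 * D 0 x ≤ s 0 * ((x - T) * ε + T * (L - f 0)) :=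
        mul_le_mul_of_nonneg_left hD0x (le_of_lt hs0)
      have h2 : s 0 * ((x - T) * ε + T * (L - f 0)) = (x - T) * (s 0 * ε) + K := by
        rw [hKdef]; ring
      have h3 : (x - T) * (s 0 * ε) ≤ x * (s 0 * ε) := by
        have h4 : 0 < s 0 * ε := by positivity
        nlinarith
      rw [hεdef] at h3
      nlinarith
    linarith
  · -- f unbounded above
    rw [not_bddAbove_iff] at hbdd
    obtain ⟨_, ⟨y, rfl⟩, hy⟩ := hbdd 0
    obtain ⟨_, ⟨m, rfl⟩, hm⟩ := hbdd (f y + 2 * s y)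
    have hmy : y < m := by
      have : f y < f m := by have := hspos y; linarith
      exact hmono.lt_iff_lt.mp this
    obtain ⟨x, hx⟩ : ∃ x : ℝ, x = 2 * m - y := ⟨_, rfl⟩
    subst hx
    set x := 2 * m - y with hx
    have hxm : m < x := by rw [hx]; linarith
    have hxy : y < x := by linarith
    have hfx : 0 < f x := lt_trans hy (hmono (by linarith))
    have hmain := hS x y
    -- upper bound for D y x
    have hDyx : D y x ≤ (x - y) * f x := by
      have h1 := htan y x
      simp only [hD]
      nlinarith
    -- lower bound for s x * D x y
    have h1 : f x * ((x - m) * (f m - f y)) ≤ s x * D x y := by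
      have h2 := hDlow x y m
      have h3 : 0 ≤ (x - m) * (f m - f y) := by
        have := hspos y
        nlinarith
      have h4 := hsf x
      nlinarith [hDnonneg x y]
    have h5 : s y * D y x ≤ s y * ((x - y) * f x) :=
      mul_le_mul_of_nonneg_left hDyx (le_of_lt (hspos y))
    -- combine: would give f m - f y ≤ 2 * s y, contradiction
    have hP : (0 : ℝ) < m - y := by linarith
    have hxmy : x - m = m - y := by rw [hx]; ring
    have hxy2 : x - y = 2 * (m - y) := by rw [hx]; ring
    have hbig : 0 < f m - f y - 2 * s y := by linarith
    have key : f x * ((m - y) * (f m - f y)) ≤ s y * (2 * (m - y)) * f x := by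
      calc f x * ((m - y) * (f m - f y))
          = f x * ((x - m) * (f m - f y)) := by rw [hxmy]
        _ ≤ s x * D x y := h1
        _ = s y * D y x := hmain
        _ ≤ s y * ((x - y) * f x) := h5
        _ = s y * (2 * (m - y)) * f x := by rw [hxy2]; ring
    nlinarith [mul_pos (mul_pos hfx hP) hbig, key]
end

section
/- Let φ : ℝ → ℝ be strictly convex twice differentiable on [x₁, xₙ] with φ' < 0 on [x₁, xₙ], and let x₁ ≤ x₂ ≤ … ≤ xₙ be data with not all equal, x̄ their mean and φ̄ the mean of their φ-values. Then there exists μ ∈ (x̄_φ, x̄] with (x̄ - μ) + (φ̄ - φ(μ))φ'(μ) = 0, where x̄_φ := φ⁻¹(φ̄) ∈ [x₁, x̄] is the φ-mean. -/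
/-!
Strict Jensen gives `φ x̄ < φ̄`, and since `φ` decreases on `[x₁, xₙ]`, `φ̄ ≤ φ x₁`; the
intermediate value theorem then yields the `φ`-mean `x_φ ∈ [x₁, x̄)`. The function
`μ ↦ (x̄ - μ) + (φ̄ - φ μ) φ'(μ)` equals `x̄ - x_φ > 0` at `x_φ` and `(φ̄ - φ x̄) φ'(x̄) < 0` at `x̄`,
so a second application of the intermediate value theorem gives `μ ∈ (x_φ, x̄]`.
-/

open Finset
open scoped BigOperators

lemma Fin.one_div_mul_sum_eq_expect {n : ℕ} (f : Fin (n + 1) → ℝ) :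
    (1 / (n + 1) : ℝ) * ∑ i, f i = 𝔼 i, f i := by
  rw [Fintype.expect_eq_sum_div_card, Fintype.card_fin, one_div_mul_eq_div]
  push_cast
  rfl

lemma StrictConvexOn.map_expect_lt {ι : Type*} {s : Set ℝ} {φ : ℝ → ℝ}
    (hφ : StrictConvexOn ℝ s φ) {t : Finset ι} {x : ι → ℝ} (hx : ∀ i ∈ t, x i ∈ s)
    (hne : ∃ j ∈ t, ∃ k ∈ t, x j ≠ x k) :
    φ (𝔼 i ∈ t, x i) < 𝔼 i ∈ t, φ (x i) := by
  have hcard : (0 : ℝ) < #t := by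
    obtain ⟨j, hj, -⟩ := hne
    exact_mod_cast card_pos.2 ⟨j, hj⟩
  have hw : ∑ _i ∈ t, (#t : ℝ)⁻¹ = 1 := by
    rw [sum_const, nsmul_eq_mul, mul_inv_cancel₀ hcard.ne']
  simpa only [expect_eq_sum_div_card, div_eq_inv_mul, mul_sum, smul_eq_mul] using
    hφ.map_sum_lt (fun _ _ ↦ inv_pos.2 hcard) hw hx hne

lemma exists_mem_Ioc_sub_add_sub_mul_eq_zero {φ g : ℝ → ℝ} {a m c : ℝ} (ham : a < m)
    (hφ : ContinuousOn φ (Set.Icc a m)) (hg : ContinuousOn g (Set.Icc a m))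
    (ha : φ a = c) (hm : φ m < c) (hgm : g m < 0) :
    ∃ μ ∈ Set.Ioc a m, (m - μ) + (c - φ μ) * g μ = 0 := by
  have hF : ContinuousOn (fun μ ↦ (m - μ) + (c - φ μ) * g μ) (Set.Icc a m) := by fun_prop
  refine intermediate_value_Ioc' ham.le hF ⟨?_, ?_⟩
  · nlinarith
  · simp only [ha, sub_self, zero_mul, add_zero, sub_pos, ham]

/-- Existence of a candidate right population minimizer for the total Bregman divergence
when `φ' < 0` on the data range: there is `μ ∈ (x̄_φ, x̄]` satisfying the orthogonality
condition, where `x̄_φ = φ⁻¹(φ̄) ∈ [x₁, x̄]` is the `φ`-mean. -/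
theorem candidate_minimizer_exists_neg_slope {n : ℕ}
    (φ : ℝ → ℝ)
    (hconv : StrictConvexOn ℝ Set.univ φ)
    (hsmooth : ContDiff ℝ 2 φ)
    (xs : Fin (n + 1) → ℝ) (hmono : Monotone xs)
    (hne : ∃ i j, xs i ≠ xs j)
    (hneg : ∀ y ∈ Set.Icc (xs 0) (xs (Fin.last n)), deriv φ y < 0)
    (xbar phibar : ℝ)
    (hxbar : xbar = (1 / (n + 1) : ℝ) * ∑ i, xs i)
    (hphibar : phibar = (1 / (n + 1) : ℝ) * ∑ i, φ (xs i)) :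
    ∃ xφ μ : ℝ, φ xφ = phibar ∧ xφ ∈ Set.Icc (xs 0) xbar ∧
      μ ∈ Set.Ioc xφ xbar ∧
      (xbar - μ) + (phibar - φ μ) * deriv φ μ = 0 := by
  rw [Fin.one_div_mul_sum_eq_expect] at hxbar hphibar
  set I := Set.Icc (xs 0) (xs (Fin.last n))
  have hxs : ∀ i, xs i ∈ I := fun i ↦ ⟨hmono (Fin.zero_le i), hmono (Fin.le_last i)⟩
  have hxbarI : xbar ∈ I := hxbar ▸
    ⟨le_expect univ_nonempty fun i _ ↦ (hxs i).1, expect_le univ_nonempty fun i _ ↦ (hxs i).2⟩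
  have hjensen : φ xbar < phibar := by
    obtain ⟨i, j, hij⟩ := hne
    exact hxbar ▸ hphibar ▸
      hconv.map_expect_lt (fun _ _ ↦ trivial) ⟨i, mem_univ _, j, mem_univ _, hij⟩
  have hanti : StrictAntiOn φ I :=
    strictAntiOn_of_deriv_neg (convex_Icc _ _) hsmooth.continuous.continuousOn
      fun y hy ↦ hneg y (interior_subset hy)
  have hphibar_le : phibar ≤ φ (xs 0) := hphibar ▸
    expect_le univ_nonempty fun i _ ↦ hanti.antitoneOn (hxs 0) (hxs i) (hxs i).1
  obtain ⟨xφ, ⟨hxφ_ge, hxφ_lt⟩, hxφ⟩ := intermediate_value_Ico' hxbarI.1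
    hsmooth.continuous.continuousOn ⟨hjensen, hphibar_le⟩
  obtain ⟨μ, hμ, horth⟩ := exists_mem_Ioc_sub_add_sub_mul_eq_zero hxφ_lt
    hsmooth.continuous.continuousOn (hsmooth.continuous_deriv one_le_two).continuousOn
    hxφ hjensen (hneg xbar hxbarI)
  exact ⟨xφ, μ, hxφ, ⟨hxφ_ge, hxφ_lt.le⟩, hμ, horth⟩
end

section
/- Let φ : ℝ → ℝ be strictly convex twice differentiable with φ' > 0 on [x₁, xₙ], and data x₁ ≤ … ≤ xₙ not all equal. Then there exists a candidate right population minimizer μ ∈ [x̄, x̄_φ) satisfying (x̄ - μ) + (φ̄ - φ(μ))φ'(μ) = 0, where x̄_φ := φ⁻¹(φ̄) ∈ [x̄, xₙ]. -/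
/-!
Strict Jensen gives `φ x̄ < φ̄`, and `φ` is monotone on the data range, so `φ̄ ≤ φ xₙ`; the
intermediate value theorem yields the `φ`-mean `x̄_φ ∈ (x̄, xₙ]`. The left-hand side of the
equation equals `(φ̄ - φ x̄) φ'(x̄) > 0` at `μ = x̄` and `x̄ - x̄_φ < 0` at `μ = x̄_φ`, so it has a root
in between.
-/

open Finset

theorem Convex.uniform_average_mem {ι : Type*} [Fintype ι] [Nonempty ι] {s : Set ℝ}
    (hs : Convex ℝ s) {f : ι → ℝ} (hf : ∀ i, f i ∈ s) :
    (1 / Fintype.card ι : ℝ) * ∑ i, f i ∈ s := by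
  rw [mul_sum]
  refine hs.sum_mem (fun _ _ => by positivity) ?_ fun i _ => hf i
  simp [card_univ]

theorem StrictConvexOn.map_uniform_average_lt {ι : Type*} [Fintype ι] {s : Set ℝ}
    {φ : ℝ → ℝ} (hφ : StrictConvexOn ℝ s φ) {f : ι → ℝ} (hfs : ∀ i, f i ∈ s)
    (hf : ∃ i j, f i ≠ f j) :
    φ ((1 / Fintype.card ι : ℝ) * ∑ i, f i) < (1 / Fintype.card ι : ℝ) * ∑ i, φ (f i) := by
  obtain ⟨i, j, hij⟩ := hf
  have : Nonempty ι := ⟨i⟩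
  simpa [mul_sum, smul_eq_mul] using hφ.map_sum_lt (t := univ)
    (w := fun _ => 1 / (Fintype.card ι : ℝ)) (fun _ _ => by positivity) (by simp [card_univ])
    (fun k _ => hfs k) ⟨i, mem_univ i, j, mem_univ j, hij⟩

theorem exists_mem_Ioo_sub_add_sub_mul_deriv_eq_zero {φ : ℝ → ℝ} (hφ : Continuous φ)
    (hφ' : Continuous (deriv φ)) {m c p : ℝ} (hmc : m < c) (hm : φ m < p) (hc : φ c = p)
    (hderiv : 0 < deriv φ m) :
    ∃ μ ∈ Set.Ioo m c, (m - μ) + (p - φ μ) * deriv φ μ = 0 := by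
  set F : ℝ → ℝ := fun μ => (m - μ) + (p - φ μ) * deriv φ μ
  have hF : Continuous F := by fun_prop
  have hFm : 0 < F m := by simpa [F] using mul_pos (sub_pos.2 hm) hderiv
  have hFc : F c < 0 := by simpa [F, hc] using hmc
  exact intermediate_value_Ioo' hmc.le hF.continuousOn ⟨hFc, hFm⟩

/-- Existence of a candidate right population minimizer for the total Bregman divergence
when `φ' > 0` on the data range: there is `μ ∈ [x̄, x̄_φ)` satisfying the orthogonality
condition, where `x̄_φ = φ⁻¹(φ̄) ∈ [x̄, xₙ]` is the `φ`-mean. -/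
theorem candidate_minimizer_exists_pos_slope {n : ℕ}
    (φ : ℝ → ℝ)
    (hconv : StrictConvexOn ℝ Set.univ φ)
    (hsmooth : ContDiff ℝ 2 φ)
    (xs : Fin (n + 1) → ℝ) (hmono : Monotone xs)
    (hne : ∃ i j, xs i ≠ xs j)
    (hpos : ∀ y ∈ Set.Icc (xs 0) (xs (Fin.last n)), 0 < deriv φ y)
    (xbar phibar : ℝ)
    (hxbar : xbar = (1 / (n + 1) : ℝ) * ∑ i, xs i)
    (hphibar : phibar = (1 / (n + 1) : ℝ) * ∑ i, φ (xs i)) :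
    ∃ xφ μ : ℝ, φ xφ = phibar ∧ xφ ∈ Set.Icc xbar (xs (Fin.last n)) ∧
      μ ∈ Set.Ico xbar xφ ∧
      (xbar - μ) + (phibar - φ μ) * deriv φ μ = 0 := by
  have hcard : (n + 1 : ℝ) = Fintype.card (Fin (n + 1)) := by simp
  rw [hcard] at hxbar hphibar
  have hrange : ∀ i, xs i ∈ Set.Icc (xs 0) (xs (Fin.last n)) :=
    fun i => ⟨hmono (Fin.zero_le i), hmono (Fin.le_last i)⟩
  have hxbar_mem : xbar ∈ Set.Icc (xs 0) (xs (Fin.last n)) :=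
    hxbar ▸ (convex_Icc _ _).uniform_average_mem hrange
  have hφmono : MonotoneOn φ (Set.Icc (xs 0) (xs (Fin.last n))) :=
    monotoneOn_of_deriv_nonneg (convex_Icc _ _) hsmooth.continuous.continuousOn
      (hsmooth.differentiable two_ne_zero).differentiableOn
      fun y hy => (hpos y (interior_subset hy)).le
  have hphibar_le : phibar ≤ φ (xs (Fin.last n)) :=
    hphibar ▸ (convex_Iic _).uniform_average_mem fun i =>
      hφmono (hrange i) (hrange (Fin.last n)) (hrange i).2
  have hjensen : φ xbar < phibar :=
    hxbar ▸ hphibar ▸ hconv.map_uniform_average_lt (fun _ => Set.mem_univ _) hne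
  obtain ⟨xφ, ⟨hxbar_lt, hxφ_le⟩, hxφ⟩ :=
    intermediate_value_Ioc hxbar_mem.2 hsmooth.continuous.continuousOn ⟨hjensen, hphibar_le⟩
  obtain ⟨μ, hμ, hroot⟩ := exists_mem_Ioo_sub_add_sub_mul_deriv_eq_zero hsmooth.continuous
    (hsmooth.continuous_deriv one_le_two) hxbar_lt hjensen hxφ (hpos xbar hxbar_mem)
  exact ⟨xφ, μ, hxφ, ⟨hxbar_lt.le, hxφ_le⟩, ⟨hμ.1.le, hμ.2⟩, hroot⟩
end
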